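/- arXiv:2011.14429 — 8 statements merged into one kernel-verified Lean document; each statement's English description precedes it below -/
import Mathlib

section
/- Let H be a real Hilbert space and let T : H → H be a bounded linear operator that is self-adjoint, positive semidefinite, and non-expansive (‖T‖ ≤ 1), and such that 1 is not an eigenvalue of T. Then for every x ∈ H the sequence of iterates T^k x converges to 0 in norm as k → ∞. -/
/-!
The key estimate is `‖y - T y‖² ≤ ‖y‖² - ‖T y‖²`, which follows from `‖T y‖² ≤ ⟪T y, y⟫`: the
Cauchy–Schwarz inequality for the positive form `⟪T ·, ·⟫` together with `‖T‖ ≤ 1`. Applied to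
`y = T^k x`, it makes `‖T^k x‖²` decreasing, with consecutive gaps dominating `‖T^k (x - T x)‖²`,
so `T^k → 0` on the range of `1 - T`. That range is dense, since its orthogonal complement is the
kernel of the self-adjoint operator `1 - T`, and the powers `T^k` are uniformly `1`-Lipschitz, so
the convergence extends to all of `H`.
-/

open Filter Topology
open scoped RealInnerProductSpace

namespace ContinuousLinearMap

section Contraction

variable {𝕜 E : Type*} [NontriviallyNormedField 𝕜] [SeminormedAddCommGroup E] [NormedSpace 𝕜 E]
  {T : E →L[𝕜] E}

theorem isClosed_setOf_tendsto_pow_apply_zero (hT : ‖T‖ ≤ 1) :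
    IsClosed {x | Tendsto (fun k : ℕ => (T ^ k) x) atTop (𝓝 0)} := by
  have hlip : LipschitzWith 1 T := T.lipschitz.weaken (by exact_mod_cast hT)
  have hequi : Equicontinuous fun k : ℕ => ⇑(T ^ k) := by
    refine (LipschitzWith.uniformEquicontinuous _ 1 fun k => ?_).equicontinuous
    simpa [FunLike.coe_pow_eq_iterate] using hlip.iterate k
  exact hequi.isClosed_setOfPred_tendsto (f := fun _ => 0) continuous_const

end Contraction

theorem denseRange_of_isSelfAdjoint_of_injective {𝕜 E : Type*} [RCLike 𝕜]
    [NormedAddCommGroup E] [InnerProductSpace 𝕜 E] [CompleteSpace E] {A : E →L[𝕜] E}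
    (hA : IsSelfAdjoint A) (hinj : Function.Injective A) : DenseRange A := by
  rw [DenseRange, ← coe_coe, ← LinearMap.coe_range, Submodule.dense_iff_topologicalClosure_eq_top,
    Submodule.topologicalClosure_eq_top_iff, orthogonal_range, hA.adjoint_eq]
  exact LinearMap.ker_eq_bot.2 hinj

variable {H : Type*} [NormedAddCommGroup H] [InnerProductSpace ℝ H] {T : H →L[ℝ] H}

theorem IsPositive.inner_apply_sq_le (hT : T.IsPositive) (u v : H) :
    ⟪T u, v⟫ ^ 2 ≤ ⟪T u, u⟫ * ⟪T v, v⟫ := by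
  have hquad : ∀ t : ℝ, 0 ≤ ⟪T v, v⟫ * (t * t) + 2 * ⟪T u, v⟫ * t + ⟪T u, u⟫ := fun t => by
    have := hT.inner_nonneg_left (u + t • v)
    simp only [map_add, map_smul, inner_add_left, inner_add_right, real_inner_smul_left,
      real_inner_smul_right, hT.inner_left_eq_inner_right v u, real_inner_comm (T u) v] at this
    linear_combination this
  have := discrim_le_zero hquad
  rw [discrim] at this
  nlinarith

theorem IsPositive.norm_apply_sq_le_inner (hT : T.IsPositive) (h1 : ‖T‖ ≤ 1) (y : H) :
    ‖T y‖ ^ 2 ≤ ⟪T y, y⟫ := by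
  have hcs : (‖T y‖ ^ 2) ^ 2 ≤ ⟪T y, y⟫ * ⟪T (T y), T y⟫ := by
    simpa only [real_inner_self_eq_norm_sq] using hT.inner_apply_sq_le y (T y)
  have hle : ⟪T (T y), T y⟫ ≤ ‖T y‖ ^ 2 := by
    calc ⟪T (T y), T y⟫ ≤ ‖T (T y)‖ * ‖T y‖ := real_inner_le_norm _ _
      _ ≤ ‖T y‖ * ‖T y‖ := by gcongr; exact (T.le_of_opNorm_le h1 _).trans_eq (one_mul _)
      _ = ‖T y‖ ^ 2 := by ring
  nlinarith [hT.inner_nonneg_left y, sq_nonneg ‖T y‖]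

theorem IsPositive.norm_sub_apply_sq_le (hT : T.IsPositive) (h1 : ‖T‖ ≤ 1) (y : H) :
    ‖y - T y‖ ^ 2 ≤ ‖y‖ ^ 2 - ‖T y‖ ^ 2 := by
  rw [norm_sub_sq_real, real_inner_comm]
  linarith [hT.norm_apply_sq_le_inner h1 y]

theorem IsPositive.tendsto_pow_apply_sub_pow_succ_apply (hT : T.IsPositive) (h1 : ‖T‖ ≤ 1)
    (x : H) : Tendsto (fun k : ℕ => (T ^ k) x - (T ^ (k + 1)) x) atTop (𝓝 0) := by
  set c : ℕ → ℝ := fun k => ‖(T ^ k) x‖ ^ 2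
  have hstep : ∀ k, (T ^ (k + 1)) x = T ((T ^ k) x) := fun k => by
    rw [pow_succ', mul_apply_eq_comp]
  have hanti : Antitone c := antitone_nat_of_succ_le fun k => by
    simp only [c, hstep]
    gcongr
    exact (T.le_of_opNorm_le h1 _).trans_eq (one_mul _)
  have hbdd : BddBelow (Set.range c) := ⟨0, by rintro _ ⟨k, rfl⟩; positivity⟩
  have hc := tendsto_atTop_ciInf hanti hbdd
  have hgap : Tendsto (fun k => c k - c (k + 1)) atTop (𝓝 0) := by
    simpa using hc.sub (hc.comp (tendsto_add_atTop_nat 1))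
  refine squeeze_zero_norm (fun k => Real.le_sqrt_of_sq_le ?_) (by simpa using hgap.sqrt)
  simpa only [c, hstep] using hT.norm_sub_apply_sq_le h1 ((T ^ k) x)

end ContinuousLinearMap

/-- Abstract convergence of the powers of the linear part of the alternating
iteration operator: a self-adjoint, positive semidefinite, non-expansive
bounded operator on a real Hilbert space without eigenvalue `1` has
`T^k x → 0` for every `x`. -/
theorem stmt_0
    {H : Type*} [NormedAddCommGroup H] [InnerProductSpace ℝ H] [CompleteSpace H]
    (T : H →L[ℝ] H)
    (hsa : ∀ x y : H, ⟪T x, y⟫ = ⟪x, T y⟫)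
    (hpos : ∀ x : H, 0 ≤ ⟪T x, x⟫)
    (hne : ‖T‖ ≤ 1)
    (hev : ∀ x : H, T x = x → x = 0) :
    ∀ x : H, Tendsto (fun k : ℕ => (T ^ k) x) atTop (nhds 0) := by
  have hT : T.IsPositive := T.isPositive_iff.2 ⟨hsa, hpos⟩
  have hinj : Function.Injective ⇑(1 - T) :=
    (injective_iff_map_eq_zero _).2 fun x hx => hev x (sub_eq_zero.1 hx).symm
  have hdense : DenseRange ⇑(1 - T) :=
    ContinuousLinearMap.denseRange_of_isSelfAdjoint_of_injective
      (.sub (.one _) hT.isSelfAdjoint) hinj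
  intro x
  refine hdense.induction_on x
    (ContinuousLinearMap.isClosed_setOf_tendsto_pow_apply_zero hne) fun v => ?_
  simpa [pow_succ] using hT.tendsto_pow_apply_sub_pow_succ_apply hne v
end

section
/- Let H be a real Hilbert space, T : H → H a bounded linear operator that is self-adjoint, positive semidefinite, non-expansive (‖T‖ ≤ 1), and such that 1 is not an eigenvalue of T. Let z ∈ H and suppose there exists φ̄ ∈ H with φ̄ = T φ̄ + z. Then for every initial point φ₀ ∈ H, the sequence defined by φ_{k+1} = T φ_k + z converges in norm to φ̄ (in particular φ̄ is the unique fixed point). -/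
open Filter
open scoped RealInnerProductSpace

/-- Abstract convergence theorem for the affine iteration `φ_{k+1} = T φ_k + z`:
if a fixed point exists, the iteration converges to it from any initial point,
and the fixed point is unique. -/
theorem stmt_1
    {H : Type*} [NormedAddCommGroup H] [InnerProductSpace ℝ H] [CompleteSpace H]
    (T : H →L[ℝ] H)
    (hsa : ∀ x y : H, ⟪T x, y⟫ = ⟪x, T y⟫)
    (hpos : ∀ x : H, 0 ≤ ⟪T x, x⟫)
    (hne : ‖T‖ ≤ 1)
    (hev : ∀ x : H, T x = x → x = 0)
    (z : H) (φb : H) (hfix : φb = T φb + z) :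
    (∀ φ : ℕ → H, (∀ k : ℕ, φ (k + 1) = T (φ k) + z) →
      Tendsto φ atTop (nhds φb)) ∧
    (∀ ψ : H, ψ = T ψ + z → ψ = φb) := by
  -- T is a contraction pointwise
  have hT1 : ∀ u : H, ‖T u‖ ≤ ‖u‖ := by
    intro u
    calc ‖T u‖ ≤ ‖T‖ * ‖u‖ := T.le_opNorm u
      _ ≤ 1 * ‖u‖ := mul_le_mul_of_nonneg_right hne (norm_nonneg u)
      _ = ‖u‖ := one_mul _
  have hTpow : ∀ (n : ℕ) (u : H), ‖(T ^ n) u‖ ≤ ‖u‖ := by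
    intro n
    induction n with
    | zero => intro u; simp
    | succ k ih =>
      intro u
      have h1 : (T ^ (k + 1)) u = (T ^ k) (T u) := by
        rw [pow_succ]; rfl
      rw [h1]
      exact le_trans (ih (T u)) (hT1 u)
  -- Cauchy-Schwarz for the positive form ⟪T·,·⟫
  have hCS : ∀ u v : H, ⟪T u, v⟫ ^ 2 ≤ ⟪T u, u⟫ * ⟪T v, v⟫ := by
    intro u v
    have hq : ∀ t : ℝ, 0 ≤ ⟪T v, v⟫ * (t * t) + (2 * ⟪T u, v⟫) * t + ⟪T u, u⟫ := by
      intro t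
      have h0 := hpos (u + t • v)
      have hsymm : ⟪T v, u⟫ = ⟪T u, v⟫ := by
        rw [hsa v u, real_inner_comm]
      simp only [map_add, map_smul, inner_add_add_self, inner_add_left,
        inner_add_right, inner_smul_left, inner_smul_right, real_inner_smul_left,
        real_inner_smul_right, starRingEnd_apply, star_trivial] at h0
      rw [hsymm] at h0
      nlinarith [h0]
    have hd := discrim_le_zero hq
    rw [discrim] at hd
    nlinarith [hd]
  -- Key inequality: ‖T y‖² ≤ ⟪T y, y⟫
  have hTsq : ∀ y : H, ‖T y‖ ^ 2 ≤ ⟪T y, y⟫ := by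
    intro y
    have h := hCS y (T y)
    have h1 : ⟪T y, T y⟫ = ‖T y‖ ^ 2 := real_inner_self_eq_norm_sq (T y)
    have h2 : ⟪T (T y), T y⟫ ≤ ‖T y‖ ^ 2 := by
      calc ⟪T (T y), T y⟫ ≤ ‖T (T y)‖ * ‖T y‖ := real_inner_le_norm _ _
        _ ≤ ‖T y‖ * ‖T y‖ := mul_le_mul_of_nonneg_right (hT1 (T y)) (norm_nonneg _)
        _ = ‖T y‖ ^ 2 := by ring
    rw [h1] at h
    -- h : (‖T y‖^2)^2 ≤ ⟪T y, y⟫ * ⟪T (T y), T y⟫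
    rcases eq_or_lt_of_le (norm_nonneg (T y)) with h0 | h0
    · rw [← h0]; simpa using hpos y
    · nlinarith [hpos y, hpos (T y), sq_nonneg ‖T y‖]
  -- Key: powers applied to (x - T x) tend to 0
  have hker : ∀ x : H, Tendsto (fun n => (T ^ n) (x - T x)) atTop (nhds 0) := by
    intro x
    set b : ℕ → ℝ := fun n => ‖(T ^ n) x‖ ^ 2 with hb
    have hanti : Antitone b := by
      apply antitone_nat_of_succ_le
      intro n
      have h1 : (T ^ (n + 1)) x = T ((T ^ n) x) := by rw [pow_succ']; rfl
      have := hT1 ((T ^ n) x)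
      rw [← h1] at this
      simpa [hb] using pow_le_pow_left₀ (norm_nonneg _) this 2
    have hbdd : BddBelow (Set.range b) := ⟨0, by rintro r ⟨n, rfl⟩; positivity⟩
    have hconv : Tendsto b atTop (nhds (⨅ n, b n)) := tendsto_atTop_ciInf hanti hbdd
    have hdiff : Tendsto (fun n => b n - b (n + 1)) atTop (nhds 0) := by
      have h2 : Tendsto (fun n => b (n + 1)) atTop (nhds (⨅ n, b n)) :=
        hconv.comp (tendsto_add_atTop_nat 1)
      simpa using hconv.sub h2
    have hle : ∀ n : ℕ, ‖(T ^ n) (x - T x)‖ ^ 2 ≤ b n - b (n + 1) := by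
      intro n
      set u := (T ^ n) x with hu
      have h1 : (T ^ (n + 1)) x = T u := by rw [pow_succ']; rfl
      have h2' : (T ^ n) (T x) = T u := by
        rw [← h1, pow_succ]; rfl
      have h2 : (T ^ n) (x - T x) = u - T u := by
        rw [map_sub, h2']
      rw [h2, hb]
      simp only [← hu, h1]
      have h3 : ‖u - T u‖ ^ 2 = ‖u‖ ^ 2 - 2 * ⟪u, T u⟫ + ‖T u‖ ^ 2 :=
        norm_sub_sq_real u (T u)
      have h4 : ⟪u, T u⟫ = ⟪T u, u⟫ := real_inner_comm _ _
      have h5 := hTsq u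
      rw [h3, h4]
      linarith
    have hsq : Tendsto (fun n => ‖(T ^ n) (x - T x)‖ ^ 2) atTop (nhds 0) :=
      squeeze_zero (fun n => by positivity) hle hdiff
    have hnorm : Tendsto (fun n => ‖(T ^ n) (x - T x)‖) atTop (nhds 0) := by
      have := (Real.continuous_sqrt.tendsto 0).comp hsq
      simpa [Real.sqrt_sq (norm_nonneg _), Function.comp_def] using this
    exact tendsto_zero_iff_norm_tendsto_zero.mpr hnorm
  -- Density of the range of (I - T)
  have hdense : Dense ((LinearMap.range ((ContinuousLinearMap.id ℝ H) - T).toLinearMap : Submodule ℝ H) : Set H) := by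
    rw [Submodule.dense_iff_topologicalClosure_eq_top,
      Submodule.topologicalClosure_eq_top_iff]
    rw [Submodule.eq_bot_iff]
    intro x hx
    have hx0 : ⟪x - T x, x⟫ = 0 := by
      have hmem : (x - T x) ∈ LinearMap.range ((ContinuousLinearMap.id ℝ H) - T).toLinearMap :=
        ⟨x, rfl⟩
      have := (Submodule.mem_orthogonal _ x).mp hx _ hmem
      exact this
    have hinner : ⟪T x, x⟫ = ‖x‖ ^ 2 := by
      rw [inner_sub_left] at hx0
      have : ⟪x, x⟫ = ‖x‖ ^ 2 := real_inner_self_eq_norm_sq x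
      linarith
    have hfixx : T x = x := by
      have h1 : ‖x - T x‖ ^ 2 = ‖x‖ ^ 2 - 2 * ⟪x, T x⟫ + ‖T x‖ ^ 2 :=
        norm_sub_sq_real x (T x)
      have h2 : ⟪x, T x⟫ = ⟪T x, x⟫ := real_inner_comm _ _
      have h3 : ‖T x‖ ≤ ‖x‖ := hT1 x
      have h4 : ‖T x‖ ^ 2 ≤ ‖x‖ ^ 2 := pow_le_pow_left₀ (norm_nonneg _) h3 2
      have h5 : ‖x - T x‖ ^ 2 ≤ 0 := by rw [h1, h2, hinner]; linarith
      have h6 : ‖x - T x‖ = 0 := by nlinarith [norm_nonneg (x - T x)]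
      have := norm_eq_zero.mp h6
      have := sub_eq_zero.mp this
      exact this.symm
    exact hev x hfixx
  -- Powers tend to zero on all of H
  have key : ∀ x : H, Tendsto (fun n => (T ^ n) x) atTop (nhds 0) := by
    intro x
    rw [NormedAddCommGroup.tendsto_nhds_zero]
    intro ε hε
    obtain ⟨y, hyS, hyd⟩ := hdense.exists_dist_lt x (by linarith : (0:ℝ) < ε / 2)
    obtain ⟨w, hw⟩ := hyS
    have hwy : y = w - T w := by rw [← hw]; rfl
    have hty : Tendsto (fun n => (T ^ n) y) atTop (nhds 0) := by
      rw [hwy]; exact hker w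
    rw [NormedAddCommGroup.tendsto_nhds_zero] at hty
    filter_upwards [hty (ε / 2) (by linarith)] with n hn
    have h1 : ‖(T ^ n) x‖ ≤ ‖(T ^ n) (x - y)‖ + ‖(T ^ n) y‖ := by
      have hx : x - y + y = x := by abel
      calc ‖(T ^ n) x‖ = ‖(T ^ n) (x - y) + (T ^ n) y‖ := by rw [← map_add, hx]
        _ ≤ ‖(T ^ n) (x - y)‖ + ‖(T ^ n) y‖ := norm_add_le _ _
    have h2 : ‖(T ^ n) (x - y)‖ ≤ ‖x - y‖ := hTpow n _
    have h3 : ‖x - y‖ < ε / 2 := by rwa [dist_eq_norm] at hyd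
    calc ‖(T ^ n) x‖ ≤ ‖(T ^ n) (x - y)‖ + ‖(T ^ n) y‖ := h1
      _ < ε / 2 + ε / 2 := by exact add_lt_add (lt_of_le_of_lt h2 h3) hn
      _ = ε := by ring
  constructor
  · intro φ hφ
    have hform : ∀ k : ℕ, φ k = (T ^ k) (φ 0 - φb) + φb := by
      intro k
      induction k with
      | zero => simp
      | succ n ih =>
        rw [hφ n, ih]
        have h1 : (T ^ (n + 1)) (φ 0 - φb) = T ((T ^ n) (φ 0 - φb)) := by
          rw [pow_succ']; rfl
        rw [map_add, h1]
        have : T φb + z = φb := hfix.symm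
        rw [add_assoc, this]
    have : Tendsto (fun k => (T ^ k) (φ 0 - φb) + φb) atTop (nhds (0 + φb)) :=
      (key (φ 0 - φb)).add_const φb
    rw [zero_add] at this
    exact Tendsto.congr (fun k => (hform k).symm) this
  · intro ψ hψ
    have hT : T (ψ - φb) = ψ - φb := by
      rw [map_sub]
      have h1 : T ψ = ψ - z := eq_sub_of_add_eq hψ.symm
      have h2 : T φb = φb - z := eq_sub_of_add_eq hfix.symm
      rw [h1, h2]; abel
    have := hev _ hT
    have := sub_eq_zero.mp this
    exact this
end

section
/- Let H be a real Hilbert space, T : H → H a bounded linear operator that is self-adjoint, positive semidefinite, non-expansive (‖T‖ ≤ 1), and such that 1 is not an eigenvalue of T, and let z ∈ H. The following are equivalent: (i) there exists an initial point φ₀ ∈ H for which the sequence φ_{k+1} = T φ_k + z converges in norm; (ii) for every initial point φ₀ ∈ H the sequence φ_{k+1} = T φ_k + z converges in norm; (iii) there exists φ̄ ∈ H with φ̄ − T φ̄ = z. Moreover, in this case the limit of the iteration equals the unique φ̄ satisfying φ̄ − T φ̄ = z. -/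
open Filter
open scoped RealInnerProductSpace

section aux
variable {H : Type*} [NormedAddCommGroup H] [InnerProductSpace ℝ H] [CompleteSpace H]

lemma aux_adj (T : H →L[ℝ] H) (hsa : ∀ x y : H, ⟪T x, y⟫ = ⟪x, T y⟫) :
    ∀ n : ℕ, ∀ x y : H, ⟪(T ^ n) x, y⟫ = ⟪x, (T ^ n) y⟫ := by
  intro n
  induction n with
  | zero => intro x y; simp
  | succ n ih =>
    intro x y
    have h1 : (T ^ (n + 1)) x = (T ^ n) (T x) := by
      rw [pow_succ, ContinuousLinearMap.mul_apply]
    have h2 : (T ^ (n + 1)) y = T ((T ^ n) y) := by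
      rw [pow_succ', ContinuousLinearMap.mul_apply]
    rw [h1, h2, ih (T x) y, hsa]

lemma aux_A (T : H →L[ℝ] H) (hne : ‖T‖ ≤ 1) (y : H) : ⟪T y, y⟫ ≤ ‖y‖ ^ 2 := by
  calc ⟪T y, y⟫ ≤ ‖T y‖ * ‖y‖ := real_inner_le_norm _ _
    _ ≤ (‖T‖ * ‖y‖) * ‖y‖ := by
        have := T.le_opNorm y
        nlinarith [norm_nonneg y]
    _ ≤ ‖y‖ ^ 2 := by nlinarith [norm_nonneg y]

lemma aux_B (T : H →L[ℝ] H) (hsa : ∀ x y : H, ⟪T x, y⟫ = ⟪x, T y⟫)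
    (hpos : ∀ x : H, 0 ≤ ⟪T x, x⟫) (hne : ‖T‖ ≤ 1) (y : H) :
    ‖T y‖ ^ 2 ≤ ⟪T y, y⟫ := by
  set u := T y with hu
  by_cases h0 : u = 0
  · simp [h0]
  · have hupos : 0 < ‖u‖ := norm_pos_iff.mpr h0
    have hquad : ∀ t : ℝ, 0 ≤ ⟪T u, u⟫ * (t * t) + (2 * ‖u‖ ^ 2) * t + ⟪T y, y⟫ := by
      intro t
      have h := hpos (y + t • u)
      have hexp : ⟪T (y + t • u), y + t • u⟫
          = ⟪T u, u⟫ * (t * t) + (2 * ‖u‖ ^ 2) * t + ⟪T y, y⟫ := by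
        rw [map_add, map_smul]
        have h1 : ⟪T u, y⟫ = ⟪T y, u⟫ := by rw [hsa u y, real_inner_comm]
        have h2 : ⟪T y, u⟫ = ‖u‖ ^ 2 := by
          rw [hu, real_inner_self_eq_norm_sq]
        simp only [inner_add_left, inner_add_right, real_inner_smul_left,
          real_inner_smul_right]
        rw [h1, h2]
        ring
      rw [hexp] at h
      exact h
    have hd := discrim_le_zero hquad
    rw [discrim] at hd
    have hAu : ⟪T u, u⟫ ≤ ‖u‖ ^ 2 := aux_A T hne u
    have hposy : 0 ≤ ⟪T y, y⟫ := hpos y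
    -- (2‖u‖²)² ≤ 4 ⟪Tu,u⟫⟪Ty,y⟫ ≤ 4‖u‖²⟪Ty,y⟫  ⇒ ‖u‖² ≤ ⟪Ty,y⟫
    nlinarith [sq_nonneg (‖u‖ ^ 2), hupos]

lemma aux_tendsto (T : H →L[ℝ] H) (hsa : ∀ x y : H, ⟪T x, y⟫ = ⟪x, T y⟫)
    (hpos : ∀ x : H, 0 ≤ ⟪T x, x⟫) (hne : ‖T‖ ≤ 1)
    (hev : ∀ x : H, T x = x → x = 0) (x : H) :
    Tendsto (fun n => (T ^ n) x) atTop (nhds 0) := by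
  set b : ℕ → ℝ := fun n => ⟪(T ^ n) x, x⟫ with hb
  have hsplit : ∀ n m : ℕ, b (n + m) = ⟪(T ^ n) x, (T ^ m) x⟫ := by
    intro n m
    have : (T ^ (n + m)) x = (T ^ n) ((T ^ m) x) := by
      rw [pow_add, ContinuousLinearMap.mul_apply]
    simp only [hb, this]
    rw [aux_adj T hsa n ((T ^ m) x) x, real_inner_comm]
  have hstep : ∀ m : ℕ, (T ^ (m + 1)) x = T ((T ^ m) x) := by
    intro m; rw [pow_succ', ContinuousLinearMap.mul_apply]
  have hnonneg : ∀ n : ℕ, 0 ≤ b n := by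
    intro n
    rcases Nat.even_or_odd n with ⟨m, hm⟩ | ⟨m, hm⟩
    · subst hm
      rw [hsplit m m, real_inner_self_eq_norm_sq]
      positivity
    · have : n = m + (m + 1) := by omega
      rw [this, hsplit m (m + 1), hstep m, real_inner_comm]
      exact hpos _
  have hanti : Antitone b := by
    apply antitone_nat_of_succ_le
    intro n
    rcases Nat.even_or_odd n with ⟨m, hm⟩ | ⟨m, hm⟩
    · have h1 : n + 1 = m + (m + 1) := by omega
      have h2 : n = m + m := by omega
      rw [h1, h2, hsplit m (m + 1), hsplit m m, hstep m, real_inner_comm,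
        real_inner_self_eq_norm_sq]
      exact aux_A T hne _
    · have h1 : n + 1 = (m + 1) + (m + 1) := by omega
      have h2 : n = m + (m + 1) := by omega
      rw [h1, h2, hsplit (m + 1) (m + 1), hsplit m (m + 1), hstep m,
        real_inner_self_eq_norm_sq, real_inner_comm]
      exact aux_B T hsa hpos hne _
  have hbdd : BddBelow (Set.range b) := ⟨0, by rintro r ⟨n, rfl⟩; exact hnonneg n⟩
  have hbconv : Tendsto b atTop (nhds (⨅ n, b n)) := tendsto_atTop_ciInf hanti hbdd
  have hbcauchy : CauchySeq b := hbconv.cauchySeq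
  have hcauchy : CauchySeq (fun n => (T ^ n) x) := by
    rw [Metric.cauchySeq_iff]
    intro ε hε
    obtain ⟨N, hN⟩ := Metric.cauchySeq_iff.mp hbcauchy (ε ^ 2 / 4) (by positivity)
    refine ⟨N, fun m hm n hn => ?_⟩
    have hsq : ‖(T ^ m) x - (T ^ n) x‖ ^ 2 = b (m + m) - 2 * b (m + n) + b (n + n) := by
      rw [norm_sub_sq_real, hsplit m m, hsplit m n, hsplit n n,
        real_inner_self_eq_norm_sq, real_inner_self_eq_norm_sq]
    have e1 := hN (m + m) (by omega) (m + n) (by omega)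
    have e2 := hN (n + n) (by omega) (m + n) (by omega)
    rw [Real.dist_eq] at e1 e2
    have hlt : ‖(T ^ m) x - (T ^ n) x‖ ^ 2 < ε ^ 2 := by
      rw [hsq]
      have a1 := abs_lt.mp e1
      have a2 := abs_lt.mp e2
      nlinarith
    rw [dist_eq_norm]
    exact lt_of_pow_lt_pow_left₀ 2 hε.le hlt
  obtain ⟨y, hy⟩ := cauchySeq_tendsto_of_complete hcauchy
  have hTy : T y = y := by
    have h1 : Tendsto (fun n => (T ^ (n + 1)) x) atTop (nhds y) :=
      hy.comp (tendsto_add_atTop_nat 1)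
    have h2 : Tendsto (fun n => T ((T ^ n) x)) atTop (nhds (T y)) :=
      (T.continuous.tendsto y).comp hy
    have heq : (fun n => (T ^ (n + 1)) x) = fun n => T ((T ^ n) x) := by
      funext n; exact hstep n
    rw [heq] at h1
    exact tendsto_nhds_unique h2 h1
  have : y = 0 := hev y hTy
  rwa [this] at hy

end aux

/-- Abstract combination of the convergence theorem and the existence criterion:
the affine iteration converges for some (equivalently, every) initial point iff
the fixed point equation `φ̄ - T φ̄ = z` is solvable, and then the limit is the
unique solution of the fixed point equation. -/
theorem stmt_2
    {H : Type*} [NormedAddCommGroup H] [InnerProductSpace ℝ H] [CompleteSpace H]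
    (T : H →L[ℝ] H)
    (hsa : ∀ x y : H, ⟪T x, y⟫ = ⟪x, T y⟫)
    (hpos : ∀ x : H, 0 ≤ ⟪T x, x⟫)
    (hne : ‖T‖ ≤ 1)
    (hev : ∀ x : H, T x = x → x = 0)
    (z : H) :
    ((∃ φ : ℕ → H, (∀ k : ℕ, φ (k + 1) = T (φ k) + z) ∧
        ∃ L : H, Tendsto φ atTop (nhds L)) ↔
      (∀ φ : ℕ → H, (∀ k : ℕ, φ (k + 1) = T (φ k) + z) →
        ∃ L : H, Tendsto φ atTop (nhds L))) ∧
    ((∃ φ : ℕ → H, (∀ k : ℕ, φ (k + 1) = T (φ k) + z) ∧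
        ∃ L : H, Tendsto φ atTop (nhds L)) ↔
      (∃ φb : H, φb - T φb = z)) ∧
    (∀ φ : ℕ → H, (∀ k : ℕ, φ (k + 1) = T (φ k) + z) →
      ∀ L : H, Tendsto φ atTop (nhds L) →
        L - T L = z ∧ ∀ ψ : H, ψ - T ψ = z → ψ = L) := by
  -- if a solution of the fixed point equation exists, every iteration converges to it
  have key : ∀ φ : ℕ → H, (∀ k : ℕ, φ (k + 1) = T (φ k) + z) →
      ∀ φb : H, φb - T φb = z → Tendsto φ atTop (nhds φb) := by
    intro φ hφ φb hφb
    have hfix : φb = T φb + z := by rw [← hφb]; abel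
    have hrec : ∀ k : ℕ, φ k - φb = (T ^ k) (φ 0 - φb) := by
      intro k
      induction k with
      | zero => simp
      | succ k ih =>
        have hstep : φ (k + 1) - φb = T (φ k - φb) := by
          rw [hφ k, map_sub]
          nth_rewrite 1 [hfix]
          abel
        rw [hstep, ih, ← ContinuousLinearMap.mul_apply, ← pow_succ']
    have h0 : Tendsto (fun k => (T ^ k) (φ 0 - φb)) atTop (nhds 0) :=
      aux_tendsto T hsa hpos hne hev (φ 0 - φb)
    have h1 : Tendsto (fun k => φ k - φb) atTop (nhds 0) := by
      have : (fun k => φ k - φb) = fun k => (T ^ k) (φ 0 - φb) := funext hrec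
      rw [this]; exact h0
    have h2 : Tendsto (fun k => (φ k - φb) + φb) atTop (nhds (0 + φb)) :=
      h1.add_const φb
    simpa using h2
  -- any limit of the iteration solves the fixed point equation
  have lim_solves : ∀ φ : ℕ → H, (∀ k : ℕ, φ (k + 1) = T (φ k) + z) →
      ∀ L : H, Tendsto φ atTop (nhds L) → L - T L = z := by
    intro φ hφ L hL
    have h1 : Tendsto (fun k => φ (k + 1)) atTop (nhds L) :=
      hL.comp (tendsto_add_atTop_nat 1)
    have h2 : Tendsto (fun k => T (φ k) + z) atTop (nhds (T L + z)) :=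
      ((T.continuous.tendsto L).comp hL).add_const z
    have heq : (fun k => φ (k + 1)) = fun k => T (φ k) + z := funext hφ
    rw [heq] at h1
    have : L = T L + z := tendsto_nhds_unique h1 h2
    exact sub_eq_iff_eq_add'.mpr this
  -- uniqueness of solutions of the fixed point equation
  have uniq : ∀ ψ L : H, ψ - T ψ = z → L - T L = z → ψ = L := by
    intro ψ L hψ hL
    have h : T (ψ - L) = ψ - L := by
      rw [map_sub]
      have : ψ - T ψ = L - T L := by rw [hψ, hL]
      have h2 : T ψ - T L = ψ - L := by
        have := sub_eq_sub_iff_sub_eq_sub.mp this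
        abel_nf at this ⊢
        linear_combination (norm := abel_nf) - this
      rw [h2]
    have := hev _ h
    exact sub_eq_zero.mp this
  -- the canonical iteration starting at 0
  let φc : ℕ → H := fun k => Nat.rec (0 : H) (fun _ p => T p + z) k
  have hφc : ∀ k : ℕ, φc (k + 1) = T (φc k) + z := fun k => rfl
  refine ⟨?_, ?_, ?_⟩
  · constructor
    · rintro ⟨φ, hφ, L, hL⟩ ψ hψ
      have hLsol := lim_solves φ hφ L hL
      exact ⟨L, key ψ hψ L hLsol⟩
    · intro h
      obtain ⟨L, hL⟩ := h φc hφc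
      exact ⟨φc, hφc, L, hL⟩
  · constructor
    · rintro ⟨φ, hφ, L, hL⟩
      exact ⟨L, lim_solves φ hφ L hL⟩
    · rintro ⟨φb, hφb⟩
      exact ⟨φc, hφc, φb, key φc hφc φb hφb⟩
  · intro φ hφ L hL
    have hLsol := lim_solves φ hφ L hL
    exact ⟨hLsol, fun ψ hψ => uniq ψ L hψ hLsol⟩
end

section
/- Let H be a real Hilbert space and T : H → H a bounded linear operator that is self-adjoint, positive semidefinite, and non-expansive (‖T‖ ≤ 1). Then for every ψ ∈ H and every integer k ≥ 0 one has ‖T^k (T ψ − ψ)‖² ≤ 2 ( ‖T^k ψ‖² − ‖T^{k+1} ψ‖² ). -/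
open Filter
open scoped RealInnerProductSpace

/-- Abstract form of estimate (GlMa3): for a self-adjoint, positive semidefinite,
non-expansive bounded operator on a real Hilbert space,
`‖T^k (Tψ - ψ)‖² ≤ 2 (‖T^k ψ‖² - ‖T^{k+1} ψ‖²)`. -/
theorem stmt_4
    {H : Type*} [NormedAddCommGroup H] [InnerProductSpace ℝ H] [CompleteSpace H]
    (T : H →L[ℝ] H)
    (hsa : ∀ x y : H, ⟪T x, y⟫ = ⟪x, T y⟫)
    (hpos : ∀ x : H, 0 ≤ ⟪T x, x⟫)
    (hne : ‖T‖ ≤ 1) :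
    ∀ (ψ : H) (k : ℕ),
      ‖(T ^ k) (T ψ - ψ)‖ ^ 2 ≤ 2 * (‖(T ^ k) ψ‖ ^ 2 - ‖(T ^ (k + 1)) ψ‖ ^ 2) := by
  intro ψ k
  -- norm bound for T
  have hnormT : ∀ u : H, ‖T u‖ ≤ ‖u‖ := by
    intro u
    calc ‖T u‖ ≤ ‖T‖ * ‖u‖ := T.le_opNorm u
    _ ≤ 1 * ‖u‖ := by
        exact mul_le_mul_of_nonneg_right hne (norm_nonneg u)
    _ = ‖u‖ := one_mul _
  -- ⟪T u, u⟫ ≤ ‖u‖²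
  have hTle : ∀ u : H, ⟪T u, u⟫ ≤ ‖u‖ ^ 2 := by
    intro u
    calc ⟪T u, u⟫ ≤ ‖T u‖ * ‖u‖ := real_inner_le_norm _ _
    _ ≤ ‖u‖ * ‖u‖ := mul_le_mul_of_nonneg_right (hnormT u) (norm_nonneg u)
    _ = ‖u‖ ^ 2 := (sq ‖u‖).symm
  -- ‖T u‖² ≤ ⟪T u, u⟫ via Cauchy–Schwarz for the positive form ⟪T·,·⟫
  have hT2 : ∀ u : H, ‖T u‖ ^ 2 ≤ ⟪T u, u⟫ := by
    intro u
    set v := T u with hv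
    set a : ℝ := ⟪T u, u⟫ with ha
    set b : ℝ := ‖v‖ ^ 2 with hb
    set c : ℝ := ⟪T v, v⟫ with hc
    have hbval : ⟪T u, v⟫ = b := by
      rw [hb, hv, sq]; exact real_inner_self_eq_norm_mul_norm v
    have hbval' : ⟪T v, u⟫ = b := by
      rw [hsa v u, real_inner_comm, hv]
      exact hbval
    have hquad : ∀ t : ℝ, 0 ≤ c * t ^ 2 + (2 * b) * t + a := by
      intro t
      have := hpos (u + t • v)
      have hexp : ⟪T (u + t • v), u + t • v⟫ = c * t ^ 2 + (2 * b) * t + a := by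
        simp only [map_add, map_smul, inner_add_add_self, inner_add_left,
          inner_add_right, inner_smul_left, inner_smul_right, real_inner_smul_left,
          real_inner_smul_right]
        rw [hbval]
        have : ⟪T v, u⟫ = b := hbval'
        rw [this]
        simp only [starRingEnd_apply, star_trivial]
        ring
      linarith [hexp ▸ this]
    have hdisc : discrim c (2 * b) a ≤ 0 := by
      rcases eq_or_ne c 0 with hc0 | hc0
      · -- if c = 0 then the affine function 2b t + a ≥ 0 forces b = 0
        have hb0 : b = 0 := by
          by_contra hbne
          have hbpos : 0 < b := lt_of_le_of_ne (by positivity) (Ne.symm hbne)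
          have := hquad (-(a + 1) / (2 * b))
          rw [hc0] at this
          have h2b : (2 * b) ≠ 0 := by positivity
          field_simp at this
          nlinarith
        simp [discrim, hc0, hb0]
      · have hcpos : 0 < c := lt_of_le_of_ne (hpos v) (Ne.symm hc0)
        exact discrim_le_zero fun x => by nlinarith [hquad x]
    have hbsq : b ^ 2 ≤ c * a := by
      have : (2 * b) ^ 2 - 4 * c * a ≤ 0 := hdisc
      nlinarith
    -- c ≤ b since ⟪T v, v⟫ ≤ ‖T v‖ ‖v‖ ≤ ‖v‖²
    have hcb : c ≤ b := hTle v
    have hanonneg : 0 ≤ a := hpos u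
    have hbnonneg : 0 ≤ b := by positivity
    -- b² ≤ c a ≤ b a, so b ≤ a (or b = 0)
    have hba : b ≤ a := by
      rcases eq_or_lt_of_le hbnonneg with hb0 | hbpos
      · rw [← hb0]; exact hanonneg
      · have : b ^ 2 ≤ b * a := le_trans hbsq (mul_le_mul_of_nonneg_right hcb hanonneg)
        nlinarith
    exact hba
  -- reduce to φ = T^k ψ
  set φ := (T ^ k) ψ with hφ
  have hpow : (T ^ (k + 1)) ψ = T φ := by
    rw [hφ, pow_succ']
    rfl
  have hcomm : (T ^ k) (T ψ) = T φ := by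
    have h1 : (T ^ k) (T ψ) = ((T ^ k) * T) ψ := rfl
    have h2 : T ((T ^ k) ψ) = (T * (T ^ k)) ψ := rfl
    rw [hφ, h1, h2, ← pow_succ, ← pow_succ']
  have himg : (T ^ k) (T ψ - ψ) = T φ - φ := by
    rw [map_sub, hcomm, hφ]
  rw [himg, hpow]
  have hexp : ‖T φ - φ‖ ^ 2 = ‖T φ‖ ^ 2 - 2 * ⟪T φ, φ⟫ + ‖φ‖ ^ 2 := by
    rw [norm_sub_sq_real]
  rw [hexp]
  have h1 := hT2 φ
  have h2 := hTle φ
  linarith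
end

section
/- Let H be a real Hilbert space and T : H → H a bounded linear operator that is self-adjoint, positive semidefinite, and non-expansive (‖T‖ ≤ 1). If there exist z ∈ H and an initial point φ₀ ∈ H such that the sequence defined by φ_{k+1} = T φ_k + z does NOT converge in H, then 1 belongs to the spectrum of T. -/
open Filter
open scoped RealInnerProductSpace

lemma cs_aux {H : Type*} [NormedAddCommGroup H] [InnerProductSpace ℝ H]
    (S : H →L[ℝ] H) (hsym : ∀ x y : H, ⟪S x, y⟫ = ⟪x, S y⟫)
    (hpos : ∀ x : H, 0 ≤ ⟪S x, x⟫) (x y : H) :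
    ⟪S x, y⟫ ^ 2 ≤ ⟪S x, x⟫ * ⟪S y, y⟫ := by
  have hyx : ⟪S y, x⟫ = ⟪S x, y⟫ := by
    rw [hsym y x, real_inner_comm]
  have key : ∀ t : ℝ, 0 ≤ ⟪S y, y⟫ * (t * t) + (2 * ⟪S x, y⟫) * t + ⟪S x, x⟫ := by
    intro t
    have h := hpos (x + t • y)
    have e1 : S (x + t • y) = S x + t • S y := by simp [map_add, map_smul]
    rw [e1, inner_add_left, inner_add_right, inner_add_right,
      real_inner_smul_left, real_inner_smul_right, real_inner_smul_left,
      real_inner_smul_right, hyx] at h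
    nlinarith [h]
  have hd := discrim_le_zero key
  rw [discrim] at hd
  nlinarith [hd]

set_option maxHeartbeats 1000000 in
/-- Abstract core of Theorem 2.6: if for some `z` and some initial point the
affine iteration `φ_{k+1} = T φ_k + z` does not converge, then `1` belongs to
the spectrum of the self-adjoint, positive semidefinite, non-expansive
operator `T`. -/
theorem stmt_5
    {H : Type*} [NormedAddCommGroup H] [InnerProductSpace ℝ H] [CompleteSpace H]
    (T : H →L[ℝ] H)
    (hsa : ∀ x y : H, ⟪T x, y⟫ = ⟪x, T y⟫)
    (hpos : ∀ x : H, 0 ≤ ⟪T x, x⟫)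
    (hne : ‖T‖ ≤ 1)
    (hdiv : ∃ (z : H) (φ : ℕ → H), (∀ k : ℕ, φ (k + 1) = T (φ k) + z) ∧
      ¬ ∃ L : H, Tendsto φ atTop (nhds L)) :
    (1 : ℝ) ∈ spectrum ℝ T := by
  by_contra hspec
  obtain ⟨z, φ, hrec, hnc⟩ := hdiv
  apply hnc
  have hunit : IsUnit ((1 : H →L[ℝ] H) - T) := by
    have := spectrum.notMem_iff.mp hspec
    simpa using this
  obtain ⟨u, hu⟩ := hunit
  set S : H →L[ℝ] H := (1 : H →L[ℝ] H) - T with hS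
  set A : H →L[ℝ] H := ↑u⁻¹ with hA
  have hAS : ∀ x : H, A (S x) = x := by
    intro x
    have : (A * (u : H →L[ℝ] H)) x = x := by
      rw [hA, u.inv_mul]; rfl
    rw [hu] at this
    exact this
  set L : H := A z with hL
  have hSL : S L = z := by
    have : ((u : H →L[ℝ] H) * A) z = z := by
      rw [hA, u.mul_inv]; rfl
    rw [hu] at this
    exact this
  have hLfix : L = T L + z := by
    have h2 : L - T L = z := by
      simpa [hS, ContinuousLinearMap.sub_apply] using hSL
    exact (sub_eq_iff_eq_add'.mp h2)
  have hz : z = L - T L := by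
    have h2 : L - T L = z := by
      simpa [hS, ContinuousLinearMap.sub_apply] using hSL
    exact h2.symm
  have hSsym : ∀ x y : H, ⟪S x, y⟫ = ⟪x, S y⟫ := by
    intro x y
    simp only [hS, ContinuousLinearMap.sub_apply, ContinuousLinearMap.one_apply,
      inner_sub_left, inner_sub_right, hsa x y]
  have hSx_eq : ∀ x : H, ⟪S x, x⟫ = ‖x‖ ^ 2 - ⟪T x, x⟫ := by
    intro x
    simp only [hS, ContinuousLinearMap.sub_apply, ContinuousLinearMap.one_apply,
      inner_sub_left]
    rw [real_inner_self_eq_norm_sq]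
  have hTx_le : ∀ x : H, ⟪T x, x⟫ ≤ ‖x‖ ^ 2 := by
    intro x
    calc ⟪T x, x⟫ ≤ ‖T x‖ * ‖x‖ := real_inner_le_norm _ _
      _ ≤ (‖T‖ * ‖x‖) * ‖x‖ := by
          nlinarith [T.le_opNorm x, norm_nonneg x, norm_nonneg (T x)]
      _ ≤ ‖x‖ ^ 2 := by nlinarith [hne, norm_nonneg x, sq_nonneg ‖x‖, norm_nonneg T]
  have hSpos : ∀ x : H, 0 ≤ ⟪S x, x⟫ := by
    intro x
    rw [hSx_eq]
    linarith [hTx_le x]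
  by_cases htriv : ∀ x : H, x = (0 : H)
  · refine ⟨L, ?_⟩
    have : φ = fun _ => L := funext fun n => (htriv _).trans (htriv L).symm
    rw [this]; exact tendsto_const_nhds
  push_neg at htriv
  obtain ⟨x₀, hx₀⟩ := htriv
  have hApos : 0 < ‖A‖ := by
    rw [norm_pos_iff]
    intro h
    exact hx₀ (by rw [← hAS x₀, h]; simp)
  have hSnorm : 0 < ‖S‖ := by
    rw [norm_pos_iff]
    intro h
    exact hx₀ (by rw [← hAS x₀, h]; simp)
  set c₀ : ℝ := 1 / (‖A‖ ^ 2 * ‖S‖) with hc₀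
  have hc₀pos : 0 < c₀ := by positivity
  have hcoer : ∀ x : H, c₀ * ‖x‖ ^ 2 ≤ ⟪S x, x⟫ := by
    intro x
    have hcs := cs_aux S hSsym hSpos x (S x)
    rw [real_inner_self_eq_norm_sq] at hcs
    have h2 : ⟪S (S x), S x⟫ ≤ ‖S‖ * ‖S x‖ ^ 2 := by
      calc ⟪S (S x), S x⟫ ≤ ‖S (S x)‖ * ‖S x‖ := real_inner_le_norm _ _
        _ ≤ (‖S‖ * ‖S x‖) * ‖S x‖ := by
            nlinarith [S.le_opNorm (S x), norm_nonneg (S x), norm_nonneg (S (S x))]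
        _ = ‖S‖ * ‖S x‖ ^ 2 := by ring
    have h3 : (‖S x‖ ^ 2) ^ 2 ≤ ⟪S x, x⟫ * (‖S‖ * ‖S x‖ ^ 2) := by
      nlinarith [hcs, hSpos x, h2, sq_nonneg (‖S x‖)]
    have h4 : ‖x‖ ≤ ‖A‖ * ‖S x‖ := by
      calc ‖x‖ = ‖A (S x)‖ := by rw [hAS]
        _ ≤ ‖A‖ * ‖S x‖ := A.le_opNorm _
    by_cases hSx : ‖S x‖ = 0
    · have hx0 : ‖x‖ = 0 := le_antisymm (by rw [hSx] at h4; simpa using h4) (norm_nonneg _)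
      rw [hx0]
      simpa using hSpos x
    · have hSxpos : 0 < ‖S x‖ := lt_of_le_of_ne (norm_nonneg _) (Ne.symm hSx)
      have h5 : ‖S x‖ ^ 2 ≤ ⟪S x, x⟫ * ‖S‖ := by
        nlinarith [h3, mul_pos hSxpos hSxpos]
      have h6 : ‖x‖ ^ 2 ≤ ‖A‖ ^ 2 * ‖S x‖ ^ 2 := by
        nlinarith [h4, norm_nonneg x, norm_nonneg (S x), hApos.le]
      have hD : (0:ℝ) < ‖A‖ ^ 2 * ‖S‖ := by positivity
      rw [hc₀, div_mul_eq_mul_div, one_mul, div_le_iff₀ hD]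
      calc ‖x‖ ^ 2 ≤ ‖A‖ ^ 2 * ‖S x‖ ^ 2 := h6
        _ ≤ ‖A‖ ^ 2 * (⟪S x, x⟫ * ‖S‖) := mul_le_mul_of_nonneg_left h5 (sq_nonneg _)
        _ = ⟪S x, x⟫ * (‖A‖ ^ 2 * ‖S‖) := by ring
  set c : ℝ := min c₀ (1/2) with hc
  have hcpos : 0 < c := lt_min hc₀pos (by norm_num)
  have hc1 : c ≤ 1/2 := min_le_right _ _
  have hTform : ∀ x : H, ⟪T x, x⟫ ≤ (1 - c) * ‖x‖ ^ 2 := by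
    intro x
    have h1 := hSx_eq x
    have h2 := hcoer x
    have h3 : c * ‖x‖ ^ 2 ≤ c₀ * ‖x‖ ^ 2 := by
      nlinarith [min_le_left c₀ (1/2:ℝ), sq_nonneg ‖x‖]
    linarith
  have hcontr : ∀ x : H, ‖T x‖ ^ 2 ≤ (1 - c) * ‖x‖ ^ 2 := by
    intro x
    have hcs := cs_aux T hsa hpos x (T x)
    rw [real_inner_self_eq_norm_sq] at hcs
    have h2 : ⟪T (T x), T x⟫ ≤ ‖T x‖ ^ 2 := by
      calc ⟪T (T x), T x⟫ ≤ ‖T (T x)‖ * ‖T x‖ := real_inner_le_norm _ _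
        _ ≤ (‖T‖ * ‖T x‖) * ‖T x‖ := by
            nlinarith [T.le_opNorm (T x), norm_nonneg (T x), norm_nonneg (T (T x))]
        _ ≤ ‖T x‖ ^ 2 := by nlinarith [hne, norm_nonneg (T x), sq_nonneg ‖T x‖, norm_nonneg T]
    have h3 : (‖T x‖ ^ 2) ^ 2 ≤ (1 - c) * ‖x‖ ^ 2 * ‖T x‖ ^ 2 := by
      nlinarith [hcs, hTform x, hpos x, hpos (T x), sq_nonneg ‖T x‖]
    by_cases hTx : ‖T x‖ = 0
    · rw [hTx]
      have : (0:ℝ) ≤ (1 - c) * ‖x‖ ^ 2 := by nlinarith [hc1, sq_nonneg ‖x‖]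
      simpa using this
    · have hTxpos : 0 < ‖T x‖ := lt_of_le_of_ne (norm_nonneg _) (Ne.symm hTx)
      nlinarith [h3, mul_pos hTxpos hTxpos]
  set r : ℝ := Real.sqrt (1 - c) with hr
  have hrnn : 0 ≤ r := Real.sqrt_nonneg _
  have hrsq : r ^ 2 = 1 - c := Real.sq_sqrt (by linarith)
  have hrlt : r < 1 := by
    nlinarith [hrsq, hcpos, hrnn]
  have hTr : ∀ x : H, ‖T x‖ ≤ r * ‖x‖ := by
    intro x
    have h1 : ‖T x‖ ^ 2 ≤ (r * ‖x‖) ^ 2 := by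
      calc ‖T x‖ ^ 2 ≤ (1 - c) * ‖x‖ ^ 2 := hcontr x
        _ = (r * ‖x‖) ^ 2 := by rw [mul_pow, hrsq]
    nlinarith [h1, norm_nonneg (T x), mul_nonneg hrnn (norm_nonneg x)]
  refine ⟨L, ?_⟩
  have hbound : ∀ k, ‖φ k - L‖ ≤ r ^ k * ‖φ 0 - L‖ := by
    intro k
    induction k with
    | zero => simp
    | succ n ih =>
      have hstep : φ (n+1) - L = T (φ n - L) := by
        rw [hrec n, map_sub, hz]
        abel
      calc ‖φ (n+1) - L‖ = ‖T (φ n - L)‖ := by rw [hstep]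
        _ ≤ r * ‖φ n - L‖ := hTr _
        _ ≤ r * (r ^ n * ‖φ 0 - L‖) := by nlinarith [ih, hrnn]
        _ = r ^ (n+1) * ‖φ 0 - L‖ := by ring
  rw [tendsto_iff_norm_sub_tendsto_zero]
  have hgeo : Tendsto (fun k : ℕ => r ^ k * ‖φ 0 - L‖) atTop (nhds 0) := by
    simpa using (tendsto_pow_atTop_nhds_zero_of_lt_one hrnn hrlt).mul_const ‖φ 0 - L‖
  exact squeeze_zero (fun k => norm_nonneg _) hbound hgeo
end

section
/- Let H be a real Hilbert space and T : H → H a bounded linear operator that is self-adjoint, positive semidefinite, non-expansive (‖T‖ ≤ 1), and such that 1 is not an eigenvalue of T. Then for every integer n ≥ 2 the operator I − T + T^n is boundedly invertible, and for every φ ∈ H one has ‖(I − T + T^n)^{-1} (T^n φ)‖ → 0 as n → ∞. -/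
open Filter Topology
open scoped RealInnerProductSpace

/-!
Write `A_n = 1 - T + T ^ n` and, for a fixed vector `x`, `q_j(k) = ⟪T ^ k (1 - T) ^ j x, x⟫`.
Since `0 ≤ T ≤ 1`, every `T ^ k (1 - T) ^ j` is a positive operator (conjugating by `T` or by
`1 - T` raises an exponent by two), and `q_j(k) - q_j(k + 1) = q_{j+1}(k)`, so each `q_j` is a
nonnegative, decreasing, convex sequence. Convexity of `q_0` gives `‖x‖² ≤ n ⟪A_n x, x⟫`, hence
`A_n` is invertible. In `‖A_n y‖² = ‖(1 - T) y + T ^ n y‖²` the cross term is `2 q_1(n) ≥ 0`; this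
gives `‖T ^ n y‖ ≤ ‖A_n y‖`, i.e. `‖A_n⁻¹ T ^ n‖ ≤ 1`, and, with convexity of `q_1`,
`4 n ‖T ^ n (1 - T) y‖² ≤ 4 q_1(n) ≤ ‖A_n y‖²`, so `A_n⁻¹ T ^ n → 0` on the range of `1 - T`.
That range is dense because `1` is not an eigenvalue of the self-adjoint `T`, and a uniformly
bounded sequence of operators tending to zero on a dense set tends to zero everywhere.
-/

section ConvexSequence

variable {g : ℕ → ℝ}

theorem sub_le_mul_sub_succ_of_antitone (hg : Antitone fun k => g k - g (k + 1)) (m n : ℕ) :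
    g m - g (m + n) ≤ n * (g m - g (m + 1)) := by
  induction n with
  | zero => simp
  | succ n ih =>
    have := hg (Nat.le_add_right m n)
    push_cast
    rw [← add_assoc]
    linarith

theorem mul_sub_succ_le_sub_of_antitone (hg : Antitone fun k => g k - g (k + 1)) (m n : ℕ) :
    n * (g (m + n) - g (m + n + 1)) ≤ g m - g (m + n) := by
  induction n with
  | zero => simp
  | succ n ih =>
    have hstep := hg (Nat.le_succ (m + n))
    have := mul_le_mul_of_nonneg_left hstep (Nat.cast_nonneg (α := ℝ) n)
    push_cast
    rw [← add_assoc]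
    linarith

end ConvexSequence

theorem Commute.ringInverse_left {M₀ : Type*} [MonoidWithZero M₀] {a b : M₀}
    (h : Commute a b) : Commute (Ring.inverse a) b := by
  by_cases ha : IsUnit a
  · obtain ⟨u, rfl⟩ := ha
    simpa only [Ring.inverse_unit] using h.units_inv_left
  · simp [Ring.inverse_non_unit a ha]

theorem commute_one_sub_add_pow {R : Type*} [Ring R] (a : R) (n : ℕ) :
    Commute (1 - a + a ^ n) a :=
  ((Commute.one_left a).sub_left (Commute.refl a)).add_left ((Commute.refl a).pow_left n)

theorem pow_mul_one_sub_pow_succ {R : Type*} [Ring R] (a : R) (k j : ℕ) :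
    a ^ k * (1 - a) ^ (j + 1) = a ^ k * (1 - a) ^ j - a ^ (k + 1) * (1 - a) ^ j := by
  rw [pow_succ', pow_succ, sub_mul, one_mul, mul_sub, mul_assoc]

namespace ContinuousLinearMap

theorem tendsto_apply_zero_of_norm_le_of_dense {𝕜 E F ι : Type*} [NontriviallyNormedField 𝕜]
    [SeminormedAddCommGroup E] [SeminormedAddCommGroup F] [NormedSpace 𝕜 E] [NormedSpace 𝕜 F]
    {S : ι → E →L[𝕜] F} {C : ℝ} (hS : ∀ i, ‖S i‖ ≤ C) {l : Filter ι} {s : Set E} (hs : Dense s)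
    (h : ∀ x ∈ s, Tendsto (fun i => S i x) l (𝓝 0)) (x : E) :
    Tendsto (fun i => S i x) l (𝓝 0) := by
  have hequi :=
    ((NormedSpace.equicontinuous_TFAE S).out 5 1).mp (⟨C, hS⟩ : ∃ C, ∀ i, ‖S i‖ ≤ C)
  have hclosed := hequi.isClosed_setOfPred_tendsto (l := l) (f := fun _ => (0 : F))
    continuous_const
  exact hclosed.closure_subset_iff.mpr h (hs.closure_eq ▸ Set.mem_univ x)

variable {H : Type*} [NormedAddCommGroup H] [InnerProductSpace ℝ H] {T : H →L[ℝ] H}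

variable (T) in
theorem inner_pow_mul_one_sub_pow_succ (x : H) (k j : ℕ) :
    ⟪(T ^ k * (1 - T) ^ (j + 1)) x, x⟫
      = ⟪(T ^ k * (1 - T) ^ j) x, x⟫ - ⟪(T ^ (k + 1) * (1 - T) ^ j) x, x⟫ := by
  rw [pow_mul_one_sub_pow_succ, sub_apply, inner_sub_left]

variable [CompleteSpace H]

theorem IsPositive.conj_of_isSelfAdjoint {P S : H →L[ℝ] H} (hP : P.IsPositive)
    (hS : IsSelfAdjoint S) : (S * P * S).IsPositive := by
  simpa [hS.adjoint_eq, mul_def, comp_assoc] using hP.adjoint_conj S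

theorem isPositive_one_sub (hT : IsSelfAdjoint T) (hT1 : ‖T‖ ≤ 1) : (1 - T).IsPositive := by
  refine (isPositive_iff' _).mpr ⟨(IsSelfAdjoint.one _).sub hT, fun x => ?_⟩
  have : ⟪T x, x⟫ ≤ ‖x‖ ^ 2 := calc
    ⟪T x, x⟫ ≤ ‖T x‖ * ‖x‖ := real_inner_le_norm _ _
    _ ≤ ‖x‖ * ‖x‖ := by gcongr; simpa using T.le_of_opNorm_le hT1 x
    _ = ‖x‖ ^ 2 := by ring
  simpa [inner_sub_left, real_inner_self_eq_norm_sq] using this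

theorem IsPositive.mul_one_sub (hT : T.IsPositive) (hT1 : ‖T‖ ≤ 1) :
    (T * (1 - T)).IsPositive := by
  have hS : IsSelfAdjoint (1 - T) := (IsSelfAdjoint.one _).sub hT.isSelfAdjoint
  have hsplit : T * (1 - T) = T * (1 - T) * T + (1 - T) * T * (1 - T) := by noncomm_ring
  rw [hsplit]
  exact ((isPositive_one_sub hT.isSelfAdjoint hT1).conj_of_isSelfAdjoint hT.isSelfAdjoint).add
    (hT.conj_of_isSelfAdjoint hS)

theorem IsPositive.pow_mul_one_sub_pow (hT : T.IsPositive) (hT1 : ‖T‖ ≤ 1) (k j : ℕ) :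
    (T ^ k * (1 - T) ^ j).IsPositive := by
  have hc : Commute T (1 - T) := (Commute.one_right T).sub_right (Commute.refl T)
  have step_j : ∀ k j, (T ^ k * (1 - T) ^ j).IsPositive →
      (T ^ k * (1 - T) ^ (j + 2)).IsPositive := fun k j h => by
    have : T ^ k * (1 - T) ^ (j + 2) = (1 - T) * (T ^ k * (1 - T) ^ j) * (1 - T) := by
      rw [← mul_assoc (1 - T), ← (hc.pow_left k).eq, mul_assoc, mul_assoc, ← pow_succ, ← pow_succ']
    exact this ▸ h.conj_of_isSelfAdjoint ((IsSelfAdjoint.one _).sub hT.isSelfAdjoint)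
  have step_k : ∀ k j, (T ^ k * (1 - T) ^ j).IsPositive →
      (T ^ (k + 2) * (1 - T) ^ j).IsPositive := fun k j h => by
    have : T ^ (k + 2) * (1 - T) ^ j = T * (T ^ k * (1 - T) ^ j) * T := by
      rw [mul_assoc, mul_assoc, ← (hc.pow_right j).eq, ← mul_assoc, ← mul_assoc, pow_succ,
        pow_succ']
    exact this ▸ h.conj_of_isSelfAdjoint hT.isSelfAdjoint
  induction k using Nat.twoStepInduction generalizing j with
  | zero =>
    induction j using Nat.twoStepInduction with
    | zero => simp [isPositive_one]
    | one => simpa using isPositive_one_sub hT.isSelfAdjoint hT1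
    | more j ih _ => exact step_j 0 j ih
  | one =>
    induction j using Nat.twoStepInduction with
    | zero => simpa using hT
    | one => simpa using hT.mul_one_sub hT1
    | more j ih _ => exact step_j 1 j ih
  | more k ih _ => exact step_k k j (ih j)

theorem IsPositive.antitone_inner_pow_mul_one_sub_pow (hT : T.IsPositive) (hT1 : ‖T‖ ≤ 1)
    (x : H) (j : ℕ) : Antitone fun k : ℕ => ⟪(T ^ k * (1 - T) ^ j) x, x⟫ :=
  antitone_nat_of_succ_le fun k => sub_nonneg.mp <|
    inner_pow_mul_one_sub_pow_succ T x k j ▸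
      (hT.pow_mul_one_sub_pow hT1 k (j + 1)).inner_nonneg_left x

theorem IsPositive.antitone_inner_pow_mul_one_sub_pow_sub_succ (hT : T.IsPositive)
    (hT1 : ‖T‖ ≤ 1) (x : H) (j : ℕ) :
    Antitone fun k : ℕ => ⟪(T ^ k * (1 - T) ^ j) x, x⟫ - ⟪(T ^ (k + 1) * (1 - T) ^ j) x, x⟫ := by
  simpa only [← inner_pow_mul_one_sub_pow_succ] using
    hT.antitone_inner_pow_mul_one_sub_pow hT1 x (j + 1)

theorem IsPositive.norm_sq_le_mul_inner_one_sub_add_pow (hT : T.IsPositive) (hT1 : ‖T‖ ≤ 1)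
    {n : ℕ} (hn : 1 ≤ n) (x : H) : ‖x‖ ^ 2 ≤ n * ⟪(1 - T + T ^ n) x, x⟫ := by
  have hconv := sub_le_mul_sub_succ_of_antitone
    (hT.antitone_inner_pow_mul_one_sub_pow_sub_succ hT1 x 0) 0 n
  have hdiff := inner_pow_mul_one_sub_pow_succ T x 0 0
  have hTn := (hT.pow_mul_one_sub_pow hT1 n 0).inner_nonneg_left x
  simp only [pow_zero, one_mul, mul_one, zero_add, pow_one, one_apply_eq_self] at hconv hdiff hTn
  rw [real_inner_self_eq_norm_sq] at hconv hdiff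
  rw [add_apply, inner_add_left]
  have : (1 : ℝ) ≤ n := by exact_mod_cast hn
  nlinarith

theorem inner_one_sub_apply_pow_apply (hT : IsSelfAdjoint T) (n : ℕ) (y : H) :
    ⟪(1 - T) y, (T ^ n) y⟫ = ⟪(T ^ n * (1 - T)) y, y⟫ := by
  rw [mul_apply_eq_comp]
  exact ((hT.pow n).isSymmetric _ _).symm

theorem IsPositive.norm_pow_apply_le (hT : T.IsPositive) (hT1 : ‖T‖ ≤ 1) (n : ℕ) (y : H) :
    ‖(T ^ n) y‖ ≤ ‖(1 - T + T ^ n) y‖ := by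
  have hcross := (hT.pow_mul_one_sub_pow hT1 n 1).inner_nonneg_left y
  rw [pow_one, ← inner_one_sub_apply_pow_apply hT.isSelfAdjoint] at hcross
  refine (sq_le_sq₀ (norm_nonneg _) (norm_nonneg _)).mp ?_
  rw [add_apply, norm_add_sq_real]
  nlinarith [sq_nonneg ‖(1 - T) y‖]

theorem IsPositive.four_mul_mul_norm_sq_pow_mul_one_sub_apply_le (hT : T.IsPositive)
    (hT1 : ‖T‖ ≤ 1) (n : ℕ) (y : H) :
    4 * n * ‖(T ^ n * (1 - T)) y‖ ^ 2 ≤ ‖(1 - T + T ^ n) y‖ ^ 2 := by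
  have hsq : ‖(T ^ n * (1 - T)) y‖ ^ 2 = ⟪((T ^ (n + n) * (1 - T) ^ 2 : H →L[ℝ] H)) y, y⟫ := by
    have hc : Commute (1 - T) (T ^ n) :=
      ((Commute.one_left T).sub_left (Commute.refl T)).pow_right n
    have hP := hT.pow_mul_one_sub_pow hT1 n 1
    rw [pow_one] at hP
    rw [← real_inner_self_eq_norm_sq, ← hP.inner_left_eq_inner_right, ← mul_apply_eq_comp,
      hc.mul_mul_mul_comm, pow_add, sq]
  have hconv := mul_sub_succ_le_sub_of_antitone
    (hT.antitone_inner_pow_mul_one_sub_pow_sub_succ hT1 y 1) n n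
  rw [← inner_pow_mul_one_sub_pow_succ] at hconv
  have hnn := (hT.pow_mul_one_sub_pow hT1 (n + n) 1).inner_nonneg_left y
  have hsplit : ‖(1 - T + T ^ n) y‖ ^ 2
      = ‖(1 - T) y - (T ^ n) y‖ ^ 2 + 4 * ⟪(T ^ n * (1 - T)) y, y⟫ := by
    rw [add_apply, norm_add_sq_real, norm_sub_sq_real,
      inner_one_sub_apply_pow_apply hT.isSelfAdjoint]
    ring
  rw [pow_one] at hconv hnn
  nlinarith [sq_nonneg ‖(1 - T) y - (T ^ n) y‖]

theorem IsPositive.isUnit_one_sub_add_pow (hT : T.IsPositive) (hT1 : ‖T‖ ≤ 1) {n : ℕ}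
    (hn : 1 ≤ n) : IsUnit (1 - T + T ^ n) := by
  have hn' : (0 : ℝ) < n := by exact_mod_cast hn
  refine isUnit_of_forall_le_norm_inner_map _ (c := (n : NNReal)⁻¹) (by positivity) fun x => ?_
  have h := hT.norm_sq_le_mul_inner_one_sub_add_pow hT1 hn x
  rw [Real.norm_eq_abs, NNReal.coe_inv, NNReal.coe_natCast]
  calc ‖x‖ ^ 2 * (n : ℝ)⁻¹ ≤ ⟪(1 - T + T ^ n) x, x⟫ := by
        rw [mul_inv_le_iff₀ hn']; linarith
    _ ≤ |⟪(1 - T + T ^ n) x, x⟫| := le_abs_self _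

theorem IsPositive.norm_ringInverse_one_sub_add_pow_mul_pow_le (hT : T.IsPositive)
    (hT1 : ‖T‖ ≤ 1) {n : ℕ} (hn : 1 ≤ n) : ‖Ring.inverse (1 - T + T ^ n) * T ^ n‖ ≤ 1 := by
  refine opNorm_le_bound _ zero_le_one fun φ => ?_
  have hinv : (1 - T + T ^ n) (Ring.inverse (1 - T + T ^ n) φ) = φ := by
    rw [← mul_apply_eq_comp, Ring.mul_inverse_cancel _ (hT.isUnit_one_sub_add_pow hT1 hn),
      one_apply_eq_self]
  rw [((commute_one_sub_add_pow T n).pow_right n).ringInverse_left.eq, mul_apply_eq_comp,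
    one_mul]
  simpa only [hinv] using hT.norm_pow_apply_le hT1 n (Ring.inverse (1 - T + T ^ n) φ)

theorem IsPositive.four_mul_mul_norm_sq_ringInverse_one_sub_add_pow_mul_pow_apply_le
    (hT : T.IsPositive) (hT1 : ‖T‖ ≤ 1) {n : ℕ} (hn : 1 ≤ n) (χ : H) :
    4 * n * ‖(Ring.inverse (1 - T + T ^ n) * T ^ n) ((1 - T) χ)‖ ^ 2 ≤ ‖χ‖ ^ 2 := by
  have hinv : (1 - T + T ^ n) (Ring.inverse (1 - T + T ^ n) χ) = χ := by
    rw [← mul_apply_eq_comp, Ring.mul_inverse_cancel _ (hT.isUnit_one_sub_add_pow hT1 hn),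
      one_apply_eq_self]
  have hA := commute_one_sub_add_pow T n
  have hc : Commute (Ring.inverse (1 - T + T ^ n)) (T ^ n * (1 - T)) :=
    ((hA.pow_right n).mul_right ((Commute.one_right _).sub_right hA)).ringInverse_left
  rw [← mul_apply_eq_comp, mul_assoc (Ring.inverse _), hc.eq, mul_apply_eq_comp]
  simpa only [hinv] using
    hT.four_mul_mul_norm_sq_pow_mul_one_sub_apply_le hT1 n (Ring.inverse (1 - T + T ^ n) χ)

theorem IsPositive.tendsto_ringInverse_one_sub_add_pow_mul_pow_apply_one_sub
    (hT : T.IsPositive) (hT1 : ‖T‖ ≤ 1) (χ : H) :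
    Tendsto (fun n : ℕ => (Ring.inverse (1 - T + T ^ n) * T ^ n) ((1 - T) χ)) atTop (𝓝 0) := by
  have hbound : Tendsto (fun n : ℕ => √(‖χ‖ ^ 2 / 4 / n)) atTop (𝓝 0) := by
    simpa only [Real.sqrt_zero] using (tendsto_const_div_atTop_nhds_zero_nat (‖χ‖ ^ 2 / 4)).sqrt
  refine squeeze_zero_norm' ?_ hbound
  filter_upwards [eventually_ge_atTop 1] with n hn
  have hn' : (0 : ℝ) < n := by exact_mod_cast hn
  refine Real.le_sqrt_of_sq_le ?_
  rw [le_div_iff₀ hn', le_div_iff₀ four_pos]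
  linarith [hT.four_mul_mul_norm_sq_ringInverse_one_sub_add_pow_mul_pow_apply_le hT1 hn χ]

theorem denseRange_one_sub (hT : IsSelfAdjoint T) (hker : ∀ x, T x = x → x = 0) :
    DenseRange (1 - T : H →L[ℝ] H) := by
  have hsym : ((1 - T : H →L[ℝ] H) : H →ₗ[ℝ] H).IsSymmetric :=
    ((IsSelfAdjoint.one _).sub hT).isSymmetric
  rw [DenseRange, ← coe_coe, ← LinearMap.coe_range, Submodule.dense_iff_topologicalClosure_eq_top,
    Submodule.topologicalClosure_eq_top_iff, hsym.orthogonal_range, LinearMap.ker_eq_bot']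
  intro x hx
  exact hker x (sub_eq_zero.mp hx).symm

theorem IsPositive.tendsto_ringInverse_one_sub_add_pow_mul_pow_apply (hT : T.IsPositive)
    (hT1 : ‖T‖ ≤ 1) (hker : ∀ x, T x = x → x = 0) (φ : H) :
    Tendsto (fun n : ℕ => (Ring.inverse (1 - T + T ^ n) * T ^ n) φ) atTop (𝓝 0) := by
  refine (tendsto_add_atTop_iff_nat 1).mp <|
    tendsto_apply_zero_of_norm_le_of_dense
      (fun n => hT.norm_ringInverse_one_sub_add_pow_mul_pow_le hT1 (Nat.le_add_left 1 n))
      (denseRange_one_sub hT.isSelfAdjoint hker) ?_ φ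
  rintro _ ⟨χ, rfl⟩
  exact (tendsto_add_atTop_iff_nat 1).mpr
    (hT.tendsto_ringInverse_one_sub_add_pow_mul_pow_apply_one_sub hT1 χ)

end ContinuousLinearMap

/-- First limit of the discrepancy principle (Theorem 2.7) for the family
`B_n = T - T^n`: the operators `I - T + T^n` are boundedly invertible and
`‖(I - T + T^n)⁻¹ (T^n φ)‖ → 0` for every `φ`. -/
theorem stmt_8
    {H : Type*} [NormedAddCommGroup H] [InnerProductSpace ℝ H] [CompleteSpace H]
    (T : H →L[ℝ] H)
    (hsa : ∀ x y : H, ⟪T x, y⟫ = ⟪x, T y⟫)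
    (hpos : ∀ x : H, 0 ≤ ⟪T x, x⟫)
    (hne : ‖T‖ ≤ 1)
    (hev : ∀ x : H, T x = x → x = 0) :
    (∀ n : ℕ, 2 ≤ n → IsUnit ((1 : H →L[ℝ] H) - T + T ^ n)) ∧
    (∀ φ : H,
      Tendsto (fun n : ℕ =>
          ‖(Ring.inverse ((1 : H →L[ℝ] H) - T + T ^ n)) ((T ^ n) φ)‖)
        atTop (nhds 0)) := by
  have hT : T.IsPositive := (T.isPositive_iff).mpr ⟨hsa, hpos⟩
  exact ⟨fun n hn => hT.isUnit_one_sub_add_pow hne (by omega), fun φ =>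
    tendsto_zero_iff_norm_tendsto_zero.mp
      (hT.tendsto_ringInverse_one_sub_add_pow_mul_pow_apply hne hev φ)⟩
end

section
/- Define μ(n) := n^{1/(1−n)} for integers n ≥ 2 (equivalently μ(n) = n^{-1/(n-1)}, the maximizer of λ ↦ λ − λ^n on [0,1]). Then lim_{n→∞} μ(n)^n / (1 + μ(n)^n − μ(n)) = 0. -/
/-!
Write `μ = x ^ (1 / (1 - x))`. Since `x / (1 - x) = 1 / (1 - x) - 1`, one has `μ ^ x = μ / x`, and the
quotient collapses to `(1 + x (μ⁻¹ - 1))⁻¹` with `μ⁻¹ = x ^ (1 / (x - 1)) = exp (log x / (x - 1))`.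
By `exp s ≥ 1 + s`, `x (μ⁻¹ - 1) ≥ x log x / (x - 1) ≥ log x`, which tends to infinity.
-/

open Filter Real

lemma rpow_one_div_one_sub_rpow_self {x : ℝ} (hx : 0 < x) (hx1 : x ≠ 1) :
    (x ^ (1 / (1 - x))) ^ x = x ^ (1 / (1 - x)) / x := by
  have hexp : 1 / (1 - x) * x = 1 / (1 - x) - 1 := by
    field_simp [sub_ne_zero.mpr hx1.symm]
    ring
  rw [← rpow_mul hx.le, hexp, rpow_sub_one hx.ne']

lemma inv_rpow_one_div_one_sub {x : ℝ} (hx : 0 ≤ x) :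
    (x ^ (1 / (1 - x)))⁻¹ = x ^ (1 / (x - 1)) := by
  rw [← rpow_neg hx, ← one_div_neg_eq_neg_one_div, neg_sub]

lemma div_div_one_add_div_sub_eq_inv {μ x : ℝ} (hμ : μ ≠ 0) (hx : x ≠ 0) :
    μ / x / (1 + μ / x - μ) = (1 + x * (μ⁻¹ - 1))⁻¹ := by
  rw [← inv_div, show (1 + μ / x - μ) / (μ / x) = 1 + x * (μ⁻¹ - 1) by field_simp; ring]

lemma log_le_mul_rpow_one_div_sub_one_sub_one {x : ℝ} (hx : 1 < x) :
    log x ≤ x * (x ^ (1 / (x - 1)) - 1) := by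
  have hx1 : 0 < x - 1 := sub_pos.mpr hx
  set s := log x / (x - 1)
  have hs : 0 ≤ s := div_nonneg (log_nonneg hx.le) hx1.le
  have hlog : log x = (x - 1) * s := (mul_div_cancel₀ _ hx1.ne').symm
  have hrpow : s ≤ x ^ (1 / (x - 1)) - 1 := by
    rw [rpow_def_of_pos (by linarith), ← div_eq_mul_one_div]
    linarith [add_one_le_exp s]
  calc log x = (x - 1) * s := hlog
    _ ≤ x * s := by nlinarith
    _ ≤ x * (x ^ (1 / (x - 1)) - 1) := mul_le_mul_of_nonneg_left hrpow (by linarith)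

/-- Key scalar limit in the proof of Theorem 2.7: with `μ(n) = n^{1/(1-n)}`
(the maximizer of `λ ↦ λ - λ^n` on `[0,1]`), one has
`μ(n)^n / (1 + μ(n)^n - μ(n)) → 0` as `n → ∞`. -/
theorem stmt_10 :
    Tendsto
      (fun n : ℕ =>
        ((n : ℝ) ^ ((1 : ℝ) / (1 - (n : ℝ)))) ^ n /
          (1 + ((n : ℝ) ^ ((1 : ℝ) / (1 - (n : ℝ)))) ^ n -
            (n : ℝ) ^ ((1 : ℝ) / (1 - (n : ℝ)))))
      atTop (nhds 0) := by
  set g : ℕ → ℝ := fun n => 1 + n * ((n : ℝ) ^ (1 / ((n : ℝ) - 1)) - 1)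
  have hg : Tendsto g atTop atTop := by
    refine tendsto_atTop_mono' atTop ?_ (tendsto_log_atTop.comp tendsto_natCast_atTop_atTop)
    filter_upwards [eventually_gt_atTop 1] with n hn
    have := log_le_mul_rpow_one_div_sub_one_sub_one (x := n) (by exact_mod_cast hn)
    simp only [Function.comp_apply, g]
    linarith
  refine (tendsto_inv_atTop_zero.comp hg).congr' ?_
  filter_upwards [eventually_gt_atTop 1] with n hn
  have hn' : (1 : ℝ) < n := by exact_mod_cast hn
  have hpow := rpow_one_div_one_sub_rpow_self (x := n) (by linarith) hn'.ne'
  rw [rpow_natCast] at hpow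
  rw [Function.comp_apply, hpow, div_div_one_add_div_sub_eq_inv (by positivity) (by positivity),
    inv_rpow_one_div_one_sub (by positivity)]
end

section
/- For j ≥ 1 let λ_j := tanh(2πj). Let (c_j)_{j≥1} be a nondecreasing sequence of positive reals with c_j → ∞, and let (ε_j)_{j≥1} be a real sequence such that M := Σ_{j≥1} j^{-1} c_j² ε_j² < ∞. Then for every J ≥ 1 and every integer k ≥ 0, Σ_{j≥1} j^{-1} λ_j^{2k} ε_j² ≤ λ_J^{2k} (c_J/c_1)² Σ_{j≥1} j^{-1} ε_j² + M / c_J². -/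
open Filter Real

lemma tanh_le_one' (x : ℝ) : Real.tanh x ≤ 1 := by
  rw [Real.tanh_eq_sinh_div_cosh, div_le_one (Real.cosh_pos x)]
  exact (Real.sinh_lt_cosh x).le

lemma tanh_nonneg' {x : ℝ} (hx : 0 ≤ x) : 0 ≤ Real.tanh x := by
  rw [Real.tanh_eq_sinh_div_cosh]
  exact div_nonneg (Real.sinh_nonneg_iff.mpr hx) (Real.cosh_pos x).le

lemma tanh_mono' {x y : ℝ} (h : x ≤ y) : Real.tanh x ≤ Real.tanh y := by
  rw [Real.tanh_eq_sinh_div_cosh, Real.tanh_eq_sinh_div_cosh,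
    div_le_div_iff₀ (Real.cosh_pos x) (Real.cosh_pos y)]
  have := Real.sinh_nonneg_iff.mpr (sub_nonneg.mpr h)
  rw [Real.sinh_sub] at this
  nlinarith

/-- Error estimate (2.26): with eigenvalues `λ_j = tanh(2πj)`, nondecreasing
positive weights `c_j → ∞` and `M = Σ_{j≥1} j⁻¹ c_j² ε_j² < ∞`, one has for
every `J ≥ 1` and `k ≥ 0`
`Σ_{j≥1} j⁻¹ λ_j^{2k} ε_j² ≤ λ_J^{2k} (c_J/c_1)² Σ_{j≥1} j⁻¹ ε_j² + M/c_J²`. -/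
theorem stmt_12 (c : ℕ → ℝ) (ε : ℕ → ℝ)
    (hc_pos : ∀ j : ℕ, 1 ≤ j → 0 < c j)
    (hc_mono : ∀ i j : ℕ, 1 ≤ i → i ≤ j → c i ≤ c j)
    (hc_top : Tendsto c atTop atTop)
    (hM : Summable (fun j : ℕ => ((j : ℝ) + 1)⁻¹ * (c (j + 1)) ^ 2 * (ε (j + 1)) ^ 2)) :
    ∀ (J : ℕ), 1 ≤ J → ∀ k : ℕ,
      (∑' j : ℕ, ((j : ℝ) + 1)⁻¹ * (Real.tanh (2 * π * ((j : ℝ) + 1))) ^ (2 * k)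
          * (ε (j + 1)) ^ 2)
        ≤ (Real.tanh (2 * π * (J : ℝ))) ^ (2 * k) * (c J / c 1) ^ 2 *
            (∑' j : ℕ, ((j : ℝ) + 1)⁻¹ * (ε (j + 1)) ^ 2)
          + (∑' j : ℕ, ((j : ℝ) + 1)⁻¹ * (c (j + 1)) ^ 2 * (ε (j + 1)) ^ 2) /
            (c J) ^ 2 := by
  intro J hJ k
  have h1 : (0:ℝ) < c 1 := hc_pos 1 le_rfl
  have hJpos : (0:ℝ) < c J := hc_pos J hJ
  have hc1J : c 1 ≤ c J := hc_mono 1 J le_rfl hJ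
  set T : ℝ := Real.tanh (2 * π * (J : ℝ)) with hT
  have hTnn : 0 ≤ T := tanh_nonneg' (by positivity)
  set g : ℕ → ℝ := fun j => ((j : ℝ) + 1)⁻¹ * (ε (j + 1)) ^ 2 with hg
  set m : ℕ → ℝ := fun j => ((j : ℝ) + 1)⁻¹ * (c (j + 1)) ^ 2 * (ε (j + 1)) ^ 2 with hm
  have hgnn : ∀ j, 0 ≤ g j := fun j => by positivity
  have hmnn : ∀ j, 0 ≤ m j := fun j => by
    have := (hc_pos (j+1) (Nat.le_add_left 1 j)).le
    positivity
  have hgle : ∀ j, g j ≤ (c 1)⁻¹ ^ 2 * m j := by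
    intro j
    have hcj : c 1 ≤ c (j+1) := hc_mono 1 (j+1) le_rfl (Nat.le_add_left 1 j)
    have hcjp : (0:ℝ) < c (j+1) := hc_pos (j+1) (Nat.le_add_left 1 j)
    have : (1:ℝ) ≤ ((c 1)⁻¹ * c (j+1)) ^ 2 := by
      rw [one_le_sq_iff_one_le_abs, abs_of_nonneg (by positivity)]
      rw [← div_eq_inv_mul, le_div_iff₀ h1]
      linarith
    calc g j = 1 * g j := (one_mul _).symm
      _ ≤ ((c 1)⁻¹ * c (j+1)) ^ 2 * g j := by
          exact mul_le_mul_of_nonneg_right this (hgnn j)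
      _ = (c 1)⁻¹ ^ 2 * m j := by simp [hm, hg]; ring
  have hgsum : Summable g :=
    Summable.of_nonneg_of_le hgnn hgle (hM.mul_left _)
  set a : ℕ → ℝ := fun j => T ^ (2*k) * (c J / c 1) ^ 2 * g j with ha
  set b : ℕ → ℝ := fun j => m j / (c J) ^ 2 with hb
  have hann : ∀ j, 0 ≤ a j := fun j => by
    have := hgnn j; positivity
  have hbnn : ∀ j, 0 ≤ b j := fun j => by
    have := hmnn j; positivity
  have hkey : ∀ j : ℕ, ((j : ℝ) + 1)⁻¹ * (Real.tanh (2 * π * ((j : ℝ) + 1))) ^ (2 * k)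
      * (ε (j + 1)) ^ 2 ≤ a j + b j := by
    intro j
    have htnn : 0 ≤ Real.tanh (2 * π * ((j : ℝ) + 1)) := tanh_nonneg' (by positivity)
    rcases le_or_gt (j + 1) J with hle | hlt
    · -- bound by a j
      have h1' : Real.tanh (2 * π * ((j : ℝ) + 1)) ≤ T := by
        apply tanh_mono'
        have : ((j:ℝ) + 1) ≤ (J:ℝ) := by exact_mod_cast hle
        nlinarith [Real.pi_pos]
      have hpow : (Real.tanh (2 * π * ((j : ℝ) + 1))) ^ (2*k) ≤ T ^ (2*k) :=
        pow_le_pow_left₀ htnn h1' _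
      have hcJ1 : (1:ℝ) ≤ (c J / c 1) ^ 2 := by
        rw [one_le_sq_iff_one_le_abs, abs_of_nonneg (by positivity)]
        rw [le_div_iff₀ h1]; linarith
      have : ((j : ℝ) + 1)⁻¹ * (Real.tanh (2 * π * ((j : ℝ) + 1))) ^ (2 * k)
          * (ε (j + 1)) ^ 2 ≤ a j := by
        have hgj := hgnn j
        calc ((j : ℝ) + 1)⁻¹ * (Real.tanh (2 * π * ((j : ℝ) + 1))) ^ (2 * k) * (ε (j + 1)) ^ 2
            = (Real.tanh (2 * π * ((j : ℝ) + 1))) ^ (2 * k) * g j := by simp [hg]; ring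
          _ ≤ T ^ (2*k) * g j := mul_le_mul_of_nonneg_right hpow hgj
          _ = T ^ (2*k) * 1 * g j := by ring
          _ ≤ T ^ (2*k) * (c J / c 1) ^ 2 * g j := by
              apply mul_le_mul_of_nonneg_right _ hgj
              exact mul_le_mul_of_nonneg_left hcJ1 (by positivity)
      linarith [hbnn j]
    · -- bound by b j
      have hcJle : c J ≤ c (j+1) := hc_mono J (j+1) hJ hlt.le
      have hpow : (Real.tanh (2 * π * ((j : ℝ) + 1))) ^ (2*k) ≤ 1 :=
        pow_le_one₀ htnn (tanh_le_one' _)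
      have hsq : (c J) ^ 2 ≤ (c (j+1)) ^ 2 := by nlinarith
      have : ((j : ℝ) + 1)⁻¹ * (Real.tanh (2 * π * ((j : ℝ) + 1))) ^ (2 * k)
          * (ε (j + 1)) ^ 2 ≤ b j := by
        have hgj := hgnn j
        calc ((j : ℝ) + 1)⁻¹ * (Real.tanh (2 * π * ((j : ℝ) + 1))) ^ (2 * k) * (ε (j + 1)) ^ 2
            = (Real.tanh (2 * π * ((j : ℝ) + 1))) ^ (2 * k) * g j := by simp [hg]; ring
          _ ≤ 1 * g j := mul_le_mul_of_nonneg_right hpow hgj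
          _ = g j := one_mul _
          _ ≤ b j := by
              simp only [hb, hm, hg]
              rw [div_eq_mul_inv]
              have hεnn : (0:ℝ) ≤ ((j:ℝ)+1)⁻¹ * (ε (j+1))^2 := hgnn j
              have h1le : (1:ℝ) ≤ (c (j+1))^2 * ((c J)^2)⁻¹ := by
                rw [← div_eq_mul_inv, le_div_iff₀ (by positivity)]
                linarith
              calc ((j:ℝ)+1)⁻¹ * (ε (j+1))^2
                  = (((j:ℝ)+1)⁻¹ * (ε (j+1))^2) * 1 := (mul_one _).symm
                _ ≤ (((j:ℝ)+1)⁻¹ * (ε (j+1))^2) * ((c (j+1))^2 * ((c J)^2)⁻¹) :=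
                    mul_le_mul_of_nonneg_left h1le hεnn
                _ = ((j:ℝ)+1)⁻¹ * (c (j+1))^2 * (ε (j+1))^2 * ((c J)^2)⁻¹ := by ring
      linarith [hann j]
  have hasum : Summable a := hgsum.mul_left _
  have hbsum : Summable b := hM.div_const _
  have habsum : Summable (fun j => a j + b j) := hasum.add hbsum
  have hfsum : Summable (fun j : ℕ => ((j : ℝ) + 1)⁻¹
      * (Real.tanh (2 * π * ((j : ℝ) + 1))) ^ (2 * k) * (ε (j + 1)) ^ 2) := by
    apply Summable.of_nonneg_of_le _ hkey habsum
    intro j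
    have := tanh_nonneg' (x := 2 * π * ((j:ℝ) + 1)) (by positivity)
    positivity
  calc (∑' j : ℕ, ((j : ℝ) + 1)⁻¹ * (Real.tanh (2 * π * ((j : ℝ) + 1))) ^ (2 * k)
        * (ε (j + 1)) ^ 2)
      ≤ ∑' j, (a j + b j) := Summable.tsum_le_tsum hkey hfsum habsum
    _ = (∑' j, a j) + ∑' j, b j := Summable.tsum_add hasum hbsum
    _ = T ^ (2*k) * (c J / c 1) ^ 2 * (∑' j, g j) + (∑' j, m j) / (c J)^2 := by
        rw [tsum_mul_left, tsum_div_const]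
end
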